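/- arXiv:0807.2245 — 3 statements merged into one kernel-verified Lean document; each statement's English description precedes it below -/
import Mathlib

section
/- Fix r ∈ [2,∞). For x ∈ ℝ^d \ {0} define h(x) = 2 ||x||_r^{2-r} (|x_i|^{r-2} x_i)_{i=1}^d and h(0) = 0. Then for all x, y ∈ ℝ^d: ||x||_r^2 + h(x)^T y ≤ ||x+y||_r^2 ≤ ||x||_r^2 + h(x)^T y + (r-1) ||y||_r^2. -/
/-- The ℓ_r norm on ℝ^d for finite r. -/
noncomputable def rnorm (d : ℕ) (r : ℝ) (x : Fin d → ℝ) : ℝ :=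
  (∑ i, |x i| ^ r) ^ (1 / r)

/-- h(x) = 2 ‖x‖_r^{2-r} (|x_i|^{r-2} x_i)_i for x ≠ 0, and h(0) = 0. -/
noncomputable def hfun (d : ℕ) (r : ℝ) (x : Fin d → ℝ) : Fin d → ℝ :=
  if x = 0 then 0 else fun i => 2 * rnorm d r x ^ (2 - r) * (|x i| ^ (r - 2) * x i)

/-!
Along a line `z(s) = x + s • y` avoiding the origin, `φ(s) = ‖z(s)‖_r ^ 2 = S(s) ^ (2 / r)` with
`S = ∑ |z_i| ^ r` has `φ' = h(z) ⬝ y` and, writing `T = S' / r`,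
`φ'' = 2 (2 - r) S ^ ((2 - r) / r - 1) T ^ 2 + 2 (r - 1) S ^ ((2 - r) / r) ∑ |z_i| ^ (r - 2) y_i²`.
The first term is nonpositive, and Hölder with exponents `r / (r - 2)`, `r / 2` bounds the second
by `2 (r - 1) ‖y‖_r ^ 2`, so Taylor's theorem gives the upper bound. If the line meets the origin,
`x` is a multiple of `y` and both sides are explicit. The lower bound is convexity in the form
`h(x) ⬝ x = 2 ‖x‖²` together with Hölder's `h(x) ⬝ z ≤ 2 ‖x‖ ‖z‖`.
-/

open Real Finset Filter Asymptotics Topology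

lemma hasDerivAt_abs_rpow_sub_two_mul_self_of_ne_zero (r : ℝ) {u : ℝ} (hu : u ≠ 0) :
    HasDerivAt (fun v : ℝ => |v| ^ (r - 2) * v) ((r - 1) * |u| ^ (r - 2)) u := by
  have hu' : |u| ≠ 0 := abs_ne_zero.2 hu
  refine (((hasDerivAt_abs hu).rpow_const (p := r - 2) (Or.inl hu')).mul
    (hasDerivAt_id' u)).congr_deriv ?_
  have hsign : (SignType.sign u : ℝ) * u = |u| := by
    rcases hu.lt_or_gt with h | h <;> simp [h, abs_of_neg, abs_of_pos]
  calc _ = (r - 2) * (|u| ^ (r - 2 - 1) * (SignType.sign u * u)) + |u| ^ (r - 2) := by ring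
    _ = (r - 1) * |u| ^ (r - 2) := by rw [hsign, ← rpow_add_one hu', sub_add_cancel]; ring

lemma hasDerivAt_abs_rpow_sub_two_mul_self {r : ℝ} (hr : 2 ≤ r) (u : ℝ) :
    HasDerivAt (fun v : ℝ => |v| ^ (r - 2) * v) ((r - 1) * |u| ^ (r - 2)) u := by
  rcases ne_or_eq u 0 with hu | rfl
  · exact hasDerivAt_abs_rpow_sub_two_mul_self_of_ne_zero r hu
  rcases hr.eq_or_lt with rfl | hr
  · refine (hasDerivAt_id' (0 : ℝ)).congr_of_eventuallyEq ?_ |>.congr_deriv (by norm_num)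
    exact Eventually.of_forall fun v => by norm_num
  have hr2 : r - 2 ≠ 0 := by linarith
  rw [abs_zero, zero_rpow hr2, mul_zero, hasDerivAt_iff_isLittleO_nhds_zero]
  have h : Tendsto (fun v : ℝ => |v| ^ (r - 2)) (𝓝 0) (𝓝 0) := by
    simpa [zero_rpow hr2] using
      (continuous_abs.tendsto (0 : ℝ)).rpow_const (p := r - 2) (Or.inr (by linarith))
  simpa using ((isLittleO_one_iff ℝ).2 h).mul_isBigO (isBigO_refl (fun v : ℝ => v) (𝓝 0))

lemma image_le_tangent_add_sq_of_hasDerivAt_le {g g' g'' : ℝ → ℝ} {M a b : ℝ}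
    (hg : ∀ t, HasDerivAt g (g' t) t) (hg' : ∀ t, HasDerivAt g' (g'' t) t) (hM : ∀ t, g'' t ≤ M)
    (hab : a ≤ b) :
    g b ≤ g a + g' a * (b - a) + M / 2 * (b - a) ^ 2 := by
  have hslope : ∀ t, a ≤ t → g' t ≤ g' a + M * (t - a) := fun t ht => by
    have := image_sub_le_mul_sub_of_deriv_le (fun s => (hg' s).differentiableAt)
      (fun s => (hg' s).deriv ▸ hM s) ht
    linarith
  have hB : ∀ t, HasDerivAt (fun s => g a + g' a * (s - a) + M / 2 * (s - a) ^ 2)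
      (g' a + M * (t - a)) t := fun t => by
    have := (((hasDerivAt_id' t).sub_const a).const_mul (g' a)).const_add (g a) |>.add
      ((((hasDerivAt_id' t).sub_const a).pow 2).const_mul (M / 2))
    exact this.congr_deriv (by ring)
  refine image_le_of_deriv_right_le_deriv_boundary (f' := g') (B' := fun t => g' a + M * (t - a))
    (fun t _ => (hg t).continuousAt.continuousWithinAt) (fun t _ => (hg t).hasDerivWithinAt)
    (by simp) (fun t _ => (hB t).continuousAt.continuousWithinAt)
    (fun t _ => (hB t).hasDerivWithinAt) (fun t ht => hslope t ht.1) ⟨hab, le_rfl⟩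

section
variable {r : ℝ}

lemma abs_rpow_sub_two_mul_self_mul_self (hr : r ≠ 0) (u : ℝ) :
    |u| ^ (r - 2) * u * u = |u| ^ r := by
  rcases eq_or_ne u 0 with rfl | hu
  · simp [zero_rpow hr]
  · rw [mul_assoc, ← abs_mul_abs_self, ← sq, ← rpow_two, ← rpow_add (abs_pos.2 hu),
      sub_add_cancel]

lemma abs_abs_rpow_sub_two_mul_self (hr : r ≠ 1) (u : ℝ) :
    |(|u| ^ (r - 2) * u)| = |u| ^ (r - 1) := by
  rcases eq_or_ne u 0 with rfl | hu
  · simp [zero_rpow (sub_ne_zero.2 hr)]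
  · rw [abs_mul, abs_of_nonneg (by positivity), ← rpow_add_one (abs_ne_zero.2 hu)]
    ring_nf

lemma hasDerivAt_add_smul_apply {ι : Type*} (x y : ι → ℝ) (i : ι) (t : ℝ) :
    HasDerivAt (fun s : ℝ => (x + s • y) i) (y i) t := by
  simpa using ((hasDerivAt_id' t).mul_const (y i)).const_add (x i)

variable {ι : Type*} [Fintype ι]

lemma sum_abs_rpow_pos {x : ι → ℝ} (hx : x ≠ 0) : 0 < ∑ i, |x i| ^ r := by
  obtain ⟨i, hi⟩ := Function.ne_iff.1 hx
  exact sum_pos' (fun j _ => by positivity) ⟨i, mem_univ i, rpow_pos_of_pos (abs_pos.2 hi) r⟩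

lemma sum_abs_rpow_sub_two_mul_mul_le (hr : 1 < r) (x z : ι → ℝ) :
    ∑ i, |x i| ^ (r - 2) * x i * z i
      ≤ (∑ i, |x i| ^ r) ^ ((r - 1) / r) * (∑ i, |z i| ^ r) ^ (1 / r) := by
  have hpq : (r / (r - 1)).HolderConjugate r := (HolderConjugate.conjExponent hr).symm
  have hr1 : r - 1 ≠ 0 := by linarith
  convert inner_le_Lp_mul_Lq univ (fun i => |x i| ^ (r - 2) * x i) z hpq using 3
  · refine sum_congr rfl fun i _ => ?_
    rw [abs_abs_rpow_sub_two_mul_self hr.ne', ← rpow_mul (abs_nonneg _), mul_div_cancel₀ _ hr1]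
  · rw [one_div_div]

lemma sum_abs_rpow_sub_two_mul_sq_le (hr : 2 ≤ r) (z y : ι → ℝ) :
    ∑ i, |z i| ^ (r - 2) * y i ^ 2
      ≤ (∑ i, |z i| ^ r) ^ ((r - 2) / r) * (∑ i, |y i| ^ r) ^ (2 / r) := by
  rcases hr.eq_or_lt with rfl | hr
  · simp
  have hr2 : r - 2 ≠ 0 := by linarith
  have hpq : (r / (r - 2)).HolderConjugate (r / 2) := by
    refine ((holderConjugate_iff_eq_conjExponent (by linarith)).2 ?_).symm
    field_simp
  have hz : ∑ i, |(|z i| ^ (r - 2))| ^ (r / (r - 2)) = ∑ i, |z i| ^ r :=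
    sum_congr rfl fun i _ => by
      rw [abs_of_nonneg (by positivity), ← rpow_mul (abs_nonneg _), mul_div_cancel₀ _ hr2]
  have hy : ∑ i, |y i ^ 2| ^ (r / 2) = ∑ i, |y i| ^ r :=
    sum_congr rfl fun i _ => by
      rw [abs_pow, ← rpow_two, ← rpow_mul (abs_nonneg _), mul_div_cancel₀ _ two_ne_zero]
  calc _ ≤ _ := inner_le_Lp_mul_Lq univ (fun i => |z i| ^ (r - 2)) (fun i => y i ^ 2) hpq
    _ = _ := by rw [hz, hy, one_div_div, one_div_div]

lemma hasDerivAt_sum_abs_rpow_add_smul (hr : 1 < r) (x y : ι → ℝ) (t : ℝ) :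
    HasDerivAt (fun s => ∑ i, |(x + s • y) i| ^ r)
      (r * ∑ i, |(x + t • y) i| ^ (r - 2) * (x + t • y) i * y i) t := by
  rw [mul_sum]
  refine HasDerivAt.fun_sum fun i _ => ?_
  refine ((hasDerivAt_abs_rpow _ hr).comp t (hasDerivAt_add_smul_apply x y i t)).congr_deriv ?_
  ring

lemma hasDerivAt_sum_abs_rpow_sub_two_mul_add_smul (hr : 2 ≤ r) (x y : ι → ℝ) (t : ℝ) :
    HasDerivAt (fun s => ∑ i, |(x + s • y) i| ^ (r - 2) * (x + s • y) i * y i)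
      ((r - 1) * ∑ i, |(x + t • y) i| ^ (r - 2) * y i ^ 2) t := by
  rw [mul_sum]
  refine HasDerivAt.fun_sum fun i _ => ?_
  refine (((hasDerivAt_abs_rpow_sub_two_mul_self hr _).comp t
    (hasDerivAt_add_smul_apply x y i t)).mul_const (y i)).congr_deriv ?_
  ring

end

section
variable {d : ℕ} {r : ℝ}

lemma rnorm_rpow (x : Fin d → ℝ) (a : ℝ) : rnorm d r x ^ a = (∑ i, |x i| ^ r) ^ (a / r) := by
  rw [rnorm, ← rpow_mul (by positivity), one_div_mul_eq_div]

lemma rnorm_sq (x : Fin d → ℝ) : rnorm d r x ^ 2 = (∑ i, |x i| ^ r) ^ (2 / r) := by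
  rw [← rpow_two, rnorm_rpow]

lemma rnorm_nonneg (x : Fin d → ℝ) : 0 ≤ rnorm d r x := by
  unfold rnorm; positivity

lemma rnorm_zero (hr : r ≠ 0) : rnorm d r 0 = 0 := by
  simp [rnorm, zero_rpow hr, hr]

lemma rnorm_smul (hr : r ≠ 0) (c : ℝ) (x : Fin d → ℝ) :
    rnorm d r (c • x) = |c| * rnorm d r x := by
  simp only [rnorm, Pi.smul_apply, smul_eq_mul, abs_mul, mul_rpow (abs_nonneg c) (abs_nonneg _),
    ← mul_sum]
  rw [mul_rpow (by positivity) (by positivity), ← rpow_mul (abs_nonneg c), mul_one_div_cancel hr,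
    rpow_one]

lemma sum_hfun_mul {x : Fin d → ℝ} (hx : x ≠ 0) (y : Fin d → ℝ) :
    ∑ i, hfun d r x i * y i
      = 2 * (∑ i, |x i| ^ r) ^ ((2 - r) / r) * ∑ i, |x i| ^ (r - 2) * x i * y i := by
  simp only [hfun, if_neg hx, rnorm_rpow, mul_sum]
  exact sum_congr rfl fun i _ => by ring

lemma sum_hfun_mul_self (hr : r ≠ 0) (x : Fin d → ℝ) :
    ∑ i, hfun d r x i * x i = 2 * rnorm d r x ^ 2 := by
  rcases eq_or_ne x 0 with rfl | hx
  · simp [hfun, rnorm_zero hr]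
  have hS := sum_abs_rpow_pos (r := r) hx
  simp only [sum_hfun_mul hx, abs_rpow_sub_two_mul_self_mul_self hr, rnorm_sq]
  rw [mul_assoc, ← rpow_add_one hS.ne']
  congr 2
  field_simp
  ring

lemma sum_hfun_mul_le (hr : 1 < r) (x z : Fin d → ℝ) :
    ∑ i, hfun d r x i * z i ≤ 2 * rnorm d r x * rnorm d r z := by
  rcases eq_or_ne x 0 with rfl | hx
  · simp [hfun, rnorm_zero (by linarith : r ≠ 0)]
  have hS := sum_abs_rpow_pos (r := r) hx
  calc ∑ i, hfun d r x i * z i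
      ≤ 2 * (∑ i, |x i| ^ r) ^ ((2 - r) / r)
          * ((∑ i, |x i| ^ r) ^ ((r - 1) / r) * (∑ i, |z i| ^ r) ^ (1 / r)) := by
        rw [sum_hfun_mul hx]
        gcongr
        exact sum_abs_rpow_sub_two_mul_mul_le hr x z
    _ = 2 * rnorm d r x * rnorm d r z := by
        rw [← mul_assoc, mul_assoc 2, ← rpow_add hS, rnorm, rnorm]
        congr 3
        ring

lemma hfun_smul (hr : r ≠ 0) (c : ℝ) (x : Fin d → ℝ) : hfun d r (c • x) = c • hfun d r x := by
  rcases eq_or_ne c 0 with rfl | hc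
  · simp [hfun]
  rcases eq_or_ne x 0 with rfl | hx
  · simp [hfun]
  have hcx : c • x ≠ 0 := smul_ne_zero hc hx
  have hc' : 0 < |c| := abs_pos.2 hc
  ext i
  simp only [hfun, if_neg hx, if_neg hcx, rnorm_smul hr, Pi.smul_apply, smul_eq_mul, abs_mul,
    mul_rpow hc'.le (rnorm_nonneg x), mul_rpow hc'.le (abs_nonneg _)]
  have hcc : |c| ^ (2 - r) * |c| ^ (r - 2) = 1 := by
    rw [← rpow_add hc', show 2 - r + (r - 2) = 0 by ring, rpow_zero]
  linear_combination (2 * rnorm d r x ^ (2 - r) * (|x i| ^ (r - 2) * (c * x i))) * hcc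

lemma rnorm_sq_add_sum_hfun_mul_le (hr : 1 < r) (x y : Fin d → ℝ) :
    rnorm d r x ^ 2 + ∑ i, hfun d r x i * y i ≤ rnorm d r (x + y) ^ 2 := by
  have hsplit : ∑ i, hfun d r x i * (x + y) i
      = 2 * rnorm d r x ^ 2 + ∑ i, hfun d r x i * y i := by
    simp only [Pi.add_apply, mul_add, sum_add_distrib, sum_hfun_mul_self (by linarith : r ≠ 0)]
  linarith [sum_hfun_mul_le hr x (x + y), two_mul_le_add_sq (rnorm d r x) (rnorm d r (x + y))]

lemma hasDerivAt_rnorm_sq_add_smul (hr : 1 < r) {x y : Fin d → ℝ} {t : ℝ} (hz : x + t • y ≠ 0) :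
    HasDerivAt (fun s => rnorm d r (x + s • y) ^ 2) (∑ i, hfun d r (x + t • y) i * y i) t := by
  simp only [rnorm_sq]
  refine ((hasDerivAt_sum_abs_rpow_add_smul hr x y t).rpow_const
    (Or.inl (sum_abs_rpow_pos hz).ne')).congr_deriv ?_
  rw [sum_hfun_mul hz, show (2 - r) / r = 2 / r - 1 by field_simp]
  field_simp

lemma exists_hasDerivAt_sum_hfun_add_smul_mul_le (hr : 2 ≤ r) {x y : Fin d → ℝ}
    (hz : ∀ s : ℝ, x + s • y ≠ 0) (t : ℝ) :
    ∃ v ≤ 2 * (r - 1) * rnorm d r y ^ 2,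
      HasDerivAt (fun s => ∑ i, hfun d r (x + s • y) i * y i) v t := by
  set S := fun s : ℝ => ∑ i, |(x + s • y) i| ^ r
  set T := fun s : ℝ => ∑ i, |(x + s • y) i| ^ (r - 2) * (x + s • y) i * y i
  set U := ∑ i, |(x + t • y) i| ^ (r - 2) * y i ^ 2
  have hS : 0 < S t := sum_abs_rpow_pos (hz t)
  have hD : HasDerivAt (fun s => 2 * S s ^ ((2 - r) / r) * T s)
      (2 * (r * T t * ((2 - r) / r) * S t ^ ((2 - r) / r - 1)) * T t
        + 2 * S t ^ ((2 - r) / r) * ((r - 1) * U)) t :=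
    (((hasDerivAt_sum_abs_rpow_add_smul (by linarith) x y t).rpow_const
      (Or.inl hS.ne')).const_mul 2).mul (hasDerivAt_sum_abs_rpow_sub_two_mul_add_smul hr x y t)
  refine ⟨_, ?_, hD.congr_of_eventuallyEq (Eventually.of_forall fun s => sum_hfun_mul (hz s) y)⟩
  have hT : 2 * (r * T t * ((2 - r) / r) * S t ^ ((2 - r) / r - 1)) * T t
      = 2 * (2 - r) * S t ^ ((2 - r) / r - 1) * T t ^ 2 := by
    field_simp
  have hU : U ≤ S t ^ ((r - 2) / r) * rnorm d r y ^ 2 := by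
    rw [rnorm_sq]
    exact sum_abs_rpow_sub_two_mul_sq_le hr _ y
  have hSS : S t ^ ((2 - r) / r) * S t ^ ((r - 2) / r) = 1 := by
    rw [← rpow_add hS, ← add_div, show 2 - r + (r - 2) = 0 by ring, zero_div, rpow_zero]
  have hT_nonpos : 2 * (2 - r) * S t ^ ((2 - r) / r - 1) * T t ^ 2 ≤ 0 := by
    have := mul_nonneg (rpow_nonneg hS.le ((2 - r) / r - 1)) (sq_nonneg (T t))
    nlinarith
  have hU_le : 2 * S t ^ ((2 - r) / r) * ((r - 1) * U) ≤ 2 * (r - 1) * rnorm d r y ^ 2 := by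
    have hr1 : 0 ≤ r - 1 := by linarith
    calc 2 * S t ^ ((2 - r) / r) * ((r - 1) * U)
        ≤ 2 * S t ^ ((2 - r) / r) * ((r - 1) * (S t ^ ((r - 2) / r) * rnorm d r y ^ 2)) := by
          gcongr
      _ = 2 * (r - 1) * (S t ^ ((2 - r) / r) * S t ^ ((r - 2) / r)) * rnorm d r y ^ 2 := by ring
      _ = 2 * (r - 1) * rnorm d r y ^ 2 := by rw [hSS, mul_one]
  rw [hT]
  linarith

lemma rnorm_sq_add_le_of_forall_add_smul_ne_zero (hr : 2 ≤ r) {x y : Fin d → ℝ}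
    (hz : ∀ s : ℝ, x + s • y ≠ 0) :
    rnorm d r (x + y) ^ 2
      ≤ rnorm d r x ^ 2 + ∑ i, hfun d r x i * y i + (r - 1) * rnorm d r y ^ 2 := by
  choose g'' hg''_le hg'' using exists_hasDerivAt_sum_hfun_add_smul_mul_le hr hz
  have := image_le_tangent_add_sq_of_hasDerivAt_le
    (fun t => hasDerivAt_rnorm_sq_add_smul (by linarith) (hz t)) hg'' hg''_le zero_le_one
  simp only [zero_smul, add_zero, one_smul, sub_zero, mul_one, one_pow] at this
  linarith

lemma rnorm_sq_smul_add_le (hr : 2 ≤ r) (c : ℝ) (y : Fin d → ℝ) :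
    rnorm d r (c • y + y) ^ 2
      ≤ rnorm d r (c • y) ^ 2 + ∑ i, hfun d r (c • y) i * y i + (r - 1) * rnorm d r y ^ 2 := by
  have hr0 : r ≠ 0 := by linarith
  have hsum : ∑ i, hfun d r (c • y) i * y i = 2 * c * rnorm d r y ^ 2 := by
    simp only [hfun_smul hr0, Pi.smul_apply, smul_eq_mul, mul_assoc, ← mul_sum,
      sum_hfun_mul_self hr0]
    ring
  rw [show c • y + y = (c + 1) • y by rw [add_smul, one_smul], rnorm_smul hr0, rnorm_smul hr0,
    hsum, mul_pow, mul_pow, sq_abs, sq_abs]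
  nlinarith [sq_nonneg (rnorm d r y)]

lemma rnorm_sq_add_le (hr : 2 ≤ r) (x y : Fin d → ℝ) :
    rnorm d r (x + y) ^ 2
      ≤ rnorm d r x ^ 2 + ∑ i, hfun d r x i * y i + (r - 1) * rnorm d r y ^ 2 := by
  by_cases hcol : ∃ c : ℝ, x = c • y
  · obtain ⟨c, rfl⟩ := hcol
    exact rnorm_sq_smul_add_le hr c y
  · refine rnorm_sq_add_le_of_forall_add_smul_ne_zero hr fun s hs => hcol ⟨-s, ?_⟩
    rw [neg_smul]
    exact eq_neg_of_add_eq_zero_left hs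

end

/-- Nemirovski's two-sided bound:
‖x‖_r² + h(x)ᵀy ≤ ‖x+y‖_r² ≤ ‖x‖_r² + h(x)ᵀy + (r-1)‖y‖_r² for 2 ≤ r < ∞. -/
theorem stmt3 (d : ℕ) (r : ℝ) (hr : 2 ≤ r) (x y : Fin d → ℝ) :
    rnorm d r x ^ 2 + ∑ i, hfun d r x i * y i ≤ rnorm d r (x + y) ^ 2 ∧
      rnorm d r (x + y) ^ 2
        ≤ rnorm d r x ^ 2 + ∑ i, hfun d r x i * y i + (r - 1) * rnorm d r y ^ 2 :=
  ⟨rnorm_sq_add_sum_hfun_mul_le (by linarith) x y, rnorm_sq_add_le hr x y⟩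
end

section
/- Let ε_1,...,ε_n be independent Rademacher variables and x_1,...,x_n ∈ ℝ^d. Then E || Σ_{i=1}^n ε_i x_i ||_∞^2 ≤ 2 log(2d) Σ_{i=1}^n ||x_i||_∞^2. In other words, ℓ_∞^d is of Rademacher type 2 with constant √(2 log(2d)). -/
/-!
Write `S_j = ∑ i, ε_i x_{ij}` and `M = max_j |S_j|`. By Hoeffding's lemma and independence each
`S_j` is sub-Gaussian with variance proxy `σ² = ∑ i, ‖x_i‖_∞²`, so
`E cosh (t M) ≤ ∑ j, E cosh (t S_j) ≤ d exp (t² σ² / 2)`. Since `s ↦ cosh √s` is convex on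
`[0, ∞)`, Jensen's inequality applied to `(t M)²` gives `cosh (t √(E M²)) ≤ E cosh (t M)`, and
`exp y ≤ 2 cosh y` turns this into `t √(E M²) ≤ log (2d) + t² σ² / 2` for every `t > 0`.
Choosing `t = √(2 log (2d)) / σ` yields `E M² ≤ 2 log (2d) σ²`.
-/

open MeasureTheory ProbabilityTheory
open Real Set
open scoped NNReal

namespace Real

lemma convexOn_sinh : ConvexOn ℝ (Ici 0) sinh := by
  refine MonotoneOn.convexOn_of_deriv (convex_Ici 0) continuous_sinh.continuousOn
    differentiable_sinh.differentiableOn ?_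
  rw [deriv_sinh, interior_Ici]
  intro x hx y hy hxy
  rw [cosh_le_cosh, abs_of_pos hx, abs_of_pos hy]
  exact hxy

lemma monotoneOn_sinh_div_self : MonotoneOn (fun x => sinh x / x) (Ioi 0) := by
  intro x (hx : 0 < x) y (hy : 0 < y) hxy
  simpa using convexOn_sinh.secant_mono self_mem_Ici (mem_Ici.2 hx.le) (mem_Ici.2 hy.le)
    hx.ne' hy.ne' hxy

lemma hasDerivAt_cosh_sqrt {s : ℝ} (hs : 0 < s) :
    HasDerivAt (fun s => cosh √s) (sinh √s / √s / 2) s := by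
  convert (hasDerivAt_sqrt hs.ne').cosh using 1
  field_simp

lemma convexOn_cosh_sqrt : ConvexOn ℝ (Ici 0) (fun s => cosh √s) := by
  refine MonotoneOn.convexOn_of_deriv (convex_Ici 0) (by fun_prop) ?_ ?_ <;> rw [interior_Ici]
  · exact fun s hs => (hasDerivAt_cosh_sqrt hs).differentiableAt.differentiableWithinAt
  · intro x hx y hy hxy
    rw [(hasDerivAt_cosh_sqrt hx).deriv, (hasDerivAt_cosh_sqrt hy).deriv]
    exact div_le_div_of_nonneg_right
      (monotoneOn_sinh_div_self (sqrt_pos.2 hx) (sqrt_pos.2 hy) (sqrt_le_sqrt hxy)) zero_le_two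

lemma le_log_two_mul_of_cosh_le {y K : ℝ} (h : cosh y ≤ K) : y ≤ log (2 * K) := by
  rw [le_log_iff_exp_le (by linarith [cosh_pos y])]
  rw [cosh_eq] at h
  linarith [exp_pos (-y)]

lemma sq_le_of_forall_mul_le {a L c : ℝ} (ha : 0 ≤ a) (hL : 0 ≤ L) (hc : 0 ≤ c)
    (h : ∀ t > 0, t * a ≤ L + c * t ^ 2 / 2) : a ^ 2 ≤ 2 * L * c := by
  rcases ha.eq_or_lt with rfl | ha
  · rw [zero_pow two_ne_zero]
    positivity
  rcases hc.eq_or_lt with rfl | hc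
  · have := h ((L + 1) / a) (by positivity)
    field_simp at this
    linarith
  · have := h (a / c) (by positivity)
    field_simp at this
    nlinarith

lemma cosh_mul_iSup_abs_le_sum {ι : Type*} [Fintype ι] [Nonempty ι] (f : ι → ℝ) (t : ℝ) :
    cosh (t * ⨆ j, |f j|) ≤ ∑ j, cosh (t * f j) := by
  obtain ⟨j, hj⟩ := exists_eq_ciSup_of_finite (f := fun j => |f j|)
  rw [← hj, ← cosh_abs, abs_mul, abs_abs, ← abs_mul, cosh_abs]
  exact Finset.single_le_sum (f := fun j => cosh (t * f j)) (fun j _ => (cosh_pos _).le)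
    (Finset.mem_univ j)

lemma iSup_abs_sq_le_sum_sq {ι : Type*} [Fintype ι] [Nonempty ι] (f : ι → ℝ) :
    (⨆ j, |f j|) ^ 2 ≤ ∑ j, f j ^ 2 := by
  obtain ⟨j, hj⟩ := exists_eq_ciSup_of_finite (f := fun j => |f j|)
  rw [← hj, sq_abs]
  exact Finset.single_le_sum (fun j _ => sq_nonneg _) (Finset.mem_univ j)

end Real

section Rademacher

variable {Ω : Type*} [MeasurableSpace Ω] {μ : Measure Ω} {e : Ω → ℝ}

def IsRademacher (μ : Measure Ω) (e : Ω → ℝ) : Prop :=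
  μ {ω | e ω = 1} = 1 / 2 ∧ μ {ω | e ω = -1} = 1 / 2

variable [IsProbabilityMeasure μ]

lemma IsRademacher.ae_eq_one_or_eq_neg_one (h : IsRademacher μ e) (he : Measurable e) :
    ∀ᵐ ω ∂μ, e ω = 1 ∨ e ω = -1 := by
  have hdisj : Disjoint {ω | e ω = 1} {ω | e ω = -1} :=
    Set.disjoint_left.2 fun ω (h1 : e ω = 1) (h2 : e ω = -1) => by norm_num [h1] at h2
  have hA : MeasurableSet {ω | e ω = 1} := he (measurableSet_singleton _)
  have hB : MeasurableSet {ω | e ω = -1} := he (measurableSet_singleton _)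
  refine (mem_ae_iff_prob_eq_one (hA.union hB)).2 ?_
  rw [measure_union hdisj hB, h.1, h.2, ENNReal.add_halves]

lemma IsRademacher.integral_eq_zero (h : IsRademacher μ e) (he : Measurable e) :
    ∫ ω, e ω ∂μ = 0 := by
  have hA : MeasurableSet {ω | e ω = 1} := he (measurableSet_singleton _)
  have hB : MeasurableSet {ω | e ω = -1} := he (measurableSet_singleton _)
  have hsplit : e =ᵐ[μ] fun ω => {ω | e ω = 1}.indicator 1 ω - {ω | e ω = -1}.indicator 1 ω := by
    filter_upwards [h.ae_eq_one_or_eq_neg_one he] with ω hω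
    rcases hω with hω | hω <;> norm_num [hω]
  rw [integral_congr_ae hsplit, integral_sub ((integrable_const 1).indicator hA)
    ((integrable_const 1).indicator hB), integral_indicator_one hA, integral_indicator_one hB,
    measureReal_def, measureReal_def, h.1, h.2, sub_self]

lemma IsRademacher.hasSubgaussianMGF_mul_const (h : IsRademacher μ e) (he : Measurable e)
    {a b : ℝ} (hab : |a| ≤ b) : HasSubgaussianMGF (fun ω => e ω * a) (‖b‖₊ ^ 2) μ := by
  have hbound : ∀ᵐ ω ∂μ, e ω * a ∈ Icc (-b) b := by
    filter_upwards [h.ae_eq_one_or_eq_neg_one he] with ω hω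
    rw [mem_Icc, ← abs_le, abs_mul]
    rcases hω with hω | hω <;> simpa [hω] using hab
  have hmean : ∫ ω, e ω * a ∂μ = 0 := by rw [integral_mul_const, h.integral_eq_zero he, zero_mul]
  convert hasSubgaussianMGF_of_mem_Icc_of_integral_eq_zero (he.mul_const a).aemeasurable
    hbound hmean using 2
  rw [sub_neg_eq_add, ← two_mul, nnnorm_mul]
  simp

end Rademacher

section Maximal

variable {Ω : Type*} [MeasurableSpace Ω] {μ : Measure Ω}

lemma ProbabilityTheory.HasSubgaussianMGF.integrable_cosh_mul {X : Ω → ℝ} {c : ℝ≥0}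
    (h : HasSubgaussianMGF X c μ) (t : ℝ) : Integrable (fun ω => cosh (t * X ω)) μ := by
  simp_rw [cosh_eq]
  exact ((h.integrable_exp_mul t).add (by simpa using h.integrable_exp_mul (-t))).div_const 2

lemma ProbabilityTheory.HasSubgaussianMGF.integral_cosh_mul_le {X : Ω → ℝ} {c : ℝ≥0}
    (h : HasSubgaussianMGF X c μ) (t : ℝ) :
    ∫ ω, cosh (t * X ω) ∂μ ≤ exp (c * t ^ 2 / 2) := by
  have hcosh : (fun ω => cosh (t * X ω)) = fun ω => (exp (t * X ω) + exp (-t * X ω)) / 2 := by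
    ext ω
    rw [cosh_eq, neg_mul]
  rw [hcosh, integral_div, integral_add (h.integrable_exp_mul t) (h.integrable_exp_mul (-t))]
  have hpos := h.mgf_le t
  have hneg := h.mgf_le (-t)
  rw [mgf] at hpos hneg
  rw [neg_sq] at hneg
  linarith

variable [IsProbabilityMeasure μ]

lemma cosh_sqrt_integral_sq_le_integral_cosh {Y : Ω → ℝ} (hY : Integrable (fun ω => Y ω ^ 2) μ)
    (hcosh : Integrable (fun ω => cosh (Y ω)) μ) :
    cosh √(∫ ω, Y ω ^ 2 ∂μ) ≤ ∫ ω, cosh (Y ω) ∂μ := by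
  have hcosh' : Integrable ((fun s => cosh √s) ∘ fun ω => Y ω ^ 2) μ := by
    simpa [Function.comp_def, sqrt_sq_eq_abs, cosh_abs] using hcosh
  simpa [sqrt_sq_eq_abs, cosh_abs] using convexOn_cosh_sqrt.map_integral_le (by fun_prop)
    isClosed_Ici (ae_of_all _ fun ω => sq_nonneg (Y ω)) hY hcosh'

theorem integral_iSup_abs_sq_le_of_hasSubgaussianMGF {ι : Type*} [Fintype ι] [Nonempty ι]
    {S : ι → Ω → ℝ} {c : ℝ≥0} (hS : ∀ j, HasSubgaussianMGF (S j) c μ) :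
    ∫ ω, (⨆ j, |S j ω|) ^ 2 ∂μ ≤ 2 * log (2 * Fintype.card ι) * c := by
  set M := fun ω => ⨆ j, |S j ω|
  have hM : AEStronglyMeasurable M μ :=
    (AEMeasurable.iSup fun j => (hS j).aemeasurable.abs).aestronglyMeasurable
  have hM2 : Integrable (fun ω => M ω ^ 2) μ := by
    refine (integrable_finsetSum Finset.univ fun j _ => ((hS j).memLp 2).integrable_sq).mono'
      (hM.pow 2) (ae_of_all _ fun ω => ?_)
    rw [norm_of_nonneg (sq_nonneg _)]
    simpa using iSup_abs_sq_le_sum_sq fun j => S j ω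
  have hcoshS (j : ι) (t : ℝ) := (hS j).integrable_cosh_mul t
  have hcoshM (t : ℝ) : Integrable (fun ω => cosh (t * M ω)) μ := by
    refine (integrable_finsetSum Finset.univ fun j _ => hcoshS j t).mono'
      (continuous_cosh.comp_aestronglyMeasurable (hM.const_mul t)) (ae_of_all _ fun ω => ?_)
    rw [norm_of_nonneg (cosh_pos _).le]
    simpa using cosh_mul_iSup_abs_le_sum (fun j => S j ω) t
  have hcard : (1 : ℝ) ≤ Fintype.card ι := by exact_mod_cast Fintype.card_pos
  have key (t : ℝ) (ht : 0 < t) :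
      t * √(∫ ω, M ω ^ 2 ∂μ) ≤ log (2 * Fintype.card ι) + c * t ^ 2 / 2 := by
    have hsqrt : √(∫ ω, (t * M ω) ^ 2 ∂μ) = t * √(∫ ω, M ω ^ 2 ∂μ) := by
      simp_rw [mul_pow]
      rw [integral_const_mul, sqrt_mul (sq_nonneg t), sqrt_sq ht.le]
    have hjensen := cosh_sqrt_integral_sq_le_integral_cosh (Y := fun ω => t * M ω)
      (by simpa only [mul_pow] using hM2.const_mul (t ^ 2)) (hcoshM t)
    have hmax : ∫ ω, cosh (t * M ω) ∂μ ≤ Fintype.card ι * exp (c * t ^ 2 / 2) :=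
      calc ∫ ω, cosh (t * M ω) ∂μ ≤ ∫ ω, ∑ j, cosh (t * S j ω) ∂μ :=
            integral_mono (hcoshM t) (integrable_finsetSum Finset.univ fun j _ => hcoshS j t)
              fun ω => cosh_mul_iSup_abs_le_sum (fun j => S j ω) t
        _ = ∑ j, ∫ ω, cosh (t * S j ω) ∂μ := integral_finsetSum _ fun j _ => hcoshS j t
        _ ≤ ∑ _j : ι, exp (c * t ^ 2 / 2) :=
            Finset.sum_le_sum fun j _ => (hS j).integral_cosh_mul_le t
        _ = Fintype.card ι * exp (c * t ^ 2 / 2) := by simp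
    have := le_log_two_mul_of_cosh_le ((hsqrt ▸ hjensen).trans hmax)
    rwa [← mul_assoc, log_mul (by positivity) (exp_pos _).ne', log_exp] at this
  have := sq_le_of_forall_mul_le (sqrt_nonneg _) (log_nonneg (by linarith)) c.2 key
  rwa [sq_sqrt (integral_nonneg fun _ => sq_nonneg _)] at this

end Maximal

/-- ℓ_∞^d is of Rademacher type 2 with constant √(2 log(2d)): for independent
Rademacher variables ε_i and vectors x_i ∈ ℝ^d,
E ‖Σ ε_i x_i‖_∞² ≤ 2 log(2d) Σ ‖x_i‖_∞². -/
theorem stmt12 {Ω : Type*} [MeasurableSpace Ω] (μ : Measure Ω) [IsProbabilityMeasure μ]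
    (d n : ℕ) (ε : Fin n → Ω → ℝ) (x : Fin n → Fin d → ℝ)
    (hmeas : ∀ i, Measurable (ε i))
    (hindep : iIndepFun ε μ)
    (hdist : ∀ i, μ {ω | ε i ω = 1} = 1/2 ∧ μ {ω | ε i ω = -1} = 1/2) :
    ∫ ω, (⨆ j, |∑ i, ε i ω * x i j|) ^ 2 ∂μ
      ≤ 2 * Real.log (2 * d) * ∑ i, (⨆ j, |x i j|) ^ 2 := by
  rcases isEmpty_or_nonempty (Fin d) with hd | hd
  · -- the empty supremum is `0` in `ℝ`, and so is `log 0`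
    simp
  have hS (j : Fin d) : HasSubgaussianMGF (fun ω => ∑ i, ε i ω * x i j)
      (∑ i, ‖⨆ k, |x i k|‖₊ ^ 2) μ :=
    HasSubgaussianMGF.sum_of_iIndepFun (hindep.comp _ fun i => measurable_id.mul_const (x i j))
      fun i _ => IsRademacher.hasSubgaussianMGF_mul_const (hdist i) (hmeas i)
        (le_ciSup (f := fun k => |x i k|) (Finite.bddAbove_range _) j)
  simpa using integral_iSup_abs_sq_le_of_hasSubgaussianMGF hS
end

section
/- Let X_1,...,X_n be independent mean-zero random vectors in ℝ^d with ||X_i||_∞ ≤ κ almost surely, and let Γ ≥ max_{1≤j≤d} Σ_{i=1}^n Var(X_{i,j}). Then for every L > 0, sqrt(E ||S_n||_∞^2) ≤ κ L log(2d) + Γ L e(L)/κ, where e(L) = exp(1/L) − 1 − 1/L and S_n = Σ_i X_i. -/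
/-!
Write `S_j = ∑ i, X i · j` and `t = κ L`. The series of `exp` gives
`b² (eˣ - 1 - x) ≤ x² (eᵇ - 1 - b)` for `|x| ≤ b`, hence for a centred variable bounded by `κ`
the bound `E exp(θ Y) ≤ 1 + θ² (eᵇ - 1 - b) / b² · Var Y` when `|θ| κ ≤ b`; with `b = 1 / L`,
`θ = ± 1 / t` and independence, `E exp(± S_j / t) ≤ exp(Γ e(L) / κ²)`. Pointwise
`cosh(max_j |S_j| / t) ≤ ∑_j cosh(S_j / t)`, and since `w ↦ cosh √w` is convex on `[0, ∞)`,
Jensen gives `exp(√(E max_j S_j²) / t) ≤ 2 E cosh(max_j |S_j| / t) ≤ 2 d exp(Γ e(L) / κ²)`.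
Taking logarithms yields the bound.
-/

open MeasureTheory ProbabilityTheory Real
open scoped Nat

theorem Real.hasSum_exp_sub_one_sub (x : ℝ) :
    HasSum (fun n : ℕ => x ^ (n + 2) / (n + 2)!) (exp x - 1 - x) := by
  have h := (hasSum_nat_add_iff' 2).mpr (NormedSpace.expSeries_div_hasSum_exp x)
  rw [← exp_eq_exp_ℝ] at h
  simpa [Finset.sum_range_succ, sub_sub] using h

theorem Real.sq_mul_exp_sub_one_sub_le {x b : ℝ} (hx : |x| ≤ b) :
    b ^ 2 * (exp x - 1 - x) ≤ x ^ 2 * (exp b - 1 - b) := by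
  refine hasSum_le (fun n => ?_) ((hasSum_exp_sub_one_sub x).mul_left (b ^ 2))
    ((hasSum_exp_sub_one_sub b).mul_left (x ^ 2))
  have hxn : x ^ n ≤ b ^ n := (le_abs_self _).trans ((abs_pow x n).trans_le
    (pow_le_pow_left₀ (abs_nonneg x) hx n))
  calc b ^ 2 * (x ^ (n + 2) / (n + 2)!) = x ^ 2 * (b ^ 2 * x ^ n) / (n + 2)! := by ring
    _ ≤ x ^ 2 * (b ^ 2 * b ^ n) / (n + 2)! := by gcongr
    _ = x ^ 2 * (b ^ (n + 2) / (n + 2)!) := by ring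

theorem Real.sinh_le_mul_cosh {t : ℝ} (ht : 0 ≤ t) : sinh t ≤ t * cosh t := by
  have := (convex_Icc 0 t).image_sub_le_mul_sub_of_deriv_le continuous_sinh.continuousOn
    differentiable_sinh.differentiableOn (C := cosh t) (fun x hx => by
      rw [interior_Icc] at hx
      rw [deriv_sinh, cosh_le_cosh, abs_of_pos hx.1, abs_of_nonneg ht]
      exact hx.2.le) 0 ⟨le_rfl, ht⟩ t ⟨ht, le_rfl⟩ ht
  simpa [mul_comm] using this

theorem Real.monotoneOn_sinh_div_self_s18 : MonotoneOn (fun t => sinh t / t) (Set.Ioi 0) := by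
  have hderiv : ∀ t : ℝ, t ≠ 0 →
      HasDerivAt (fun t => sinh t / t) ((cosh t * t - sinh t * 1) / t ^ 2) t :=
    fun t ht => (hasDerivAt_sinh t).div (hasDerivAt_id t) ht
  refine monotoneOn_of_deriv_nonneg (convex_Ioi 0)
    (fun t ht => (hderiv t (ne_of_gt ht)).continuousAt.continuousWithinAt)
    (fun t ht =>
      (hderiv t (ne_of_gt (interior_subset ht))).differentiableAt.differentiableWithinAt)
    (fun t ht => ?_)
  rw [interior_Ioi] at ht
  rw [(hderiv t (ne_of_gt ht)).deriv]
  have := sinh_le_mul_cosh (le_of_lt ht)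
  apply div_nonneg _ (sq_nonneg t)
  linarith

theorem Real.convexOn_cosh_sqrt_s18 : ConvexOn ℝ (Set.Ici 0) (fun w => cosh (√w)) := by
  have hderiv : ∀ w : ℝ, 0 < w →
      HasDerivAt (fun w => cosh (√w)) (sinh (√w) / √w / 2) w := fun w hw =>
    ((hasDerivAt_sqrt hw.ne').cosh).congr_deriv (by field_simp)
  refine MonotoneOn.convexOn_of_deriv (convex_Ici 0)
    (continuous_cosh.comp continuous_sqrt).continuousOn
    (fun w hw => ?_) (fun v hv w hw hvw => ?_)
  · rw [interior_Ici] at hw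
    exact (hderiv w hw).differentiableAt.differentiableWithinAt
  · rw [interior_Ici] at hv hw
    rw [(hderiv v hv).deriv, (hderiv w hw).deriv]
    exact div_le_div_of_nonneg_right
      (monotoneOn_sinh_div_self_s18 (sqrt_pos.2 hv) (sqrt_pos.2 hw) (sqrt_le_sqrt hvw)) zero_le_two

theorem Real.cosh_mul_iSup_abs_le_sum_s18 {ι : Type*} [Fintype ι] [Nonempty ι] (θ : ℝ) (f : ι → ℝ) :
    cosh (θ * ⨆ i, |f i|) ≤ ∑ i, cosh (θ * f i) := by
  obtain ⟨i, hi⟩ := exists_eq_ciSup_of_finite (f := fun i => |f i|)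
  have hcosh : cosh (θ * |f i|) = cosh (θ * f i) := by
    rcases abs_choice (f i) with h | h <;> simp [h]
  rw [← hi, hcosh]
  exact Finset.single_le_sum (f := fun j => cosh (θ * f j)) (fun j _ => (cosh_pos _).le)
    (Finset.mem_univ i)

namespace ProbabilityTheory

variable {Ω : Type*} [MeasurableSpace Ω] {μ : Measure Ω}

theorem integral_cosh_mul_eq {Y : Ω → ℝ} {θ : ℝ}
    (hpos : Integrable (fun ω => exp (θ * Y ω)) μ)
    (hneg : Integrable (fun ω => exp (-θ * Y ω)) μ) :
    ∫ ω, cosh (θ * Y ω) ∂μ = (mgf Y μ θ + mgf Y μ (-θ)) / 2 := by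
  simp_rw [cosh_eq, ← neg_mul]
  rw [integral_div, integral_add hpos hneg]
  rfl

theorem integrable_comp_of_abs_le [IsFiniteMeasure μ] {E : Type*} [NormedAddCommGroup E]
    {Z : Ω → ℝ} {C : ℝ} (hZ : AEMeasurable Z μ) (hbdd : ∀ᵐ ω ∂μ, |Z ω| ≤ C) {g : ℝ → E}
    (hg : Continuous g) : Integrable (fun ω => g (Z ω)) μ := by
  obtain ⟨M, hM⟩ :=
    (isCompact_Icc (a := -C) (b := C)).exists_bound_of_continuousOn hg.continuousOn
  exact .of_bound (hg.comp_aestronglyMeasurable hZ.aestronglyMeasurable) M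
    (hbdd.mono fun ω h => hM _ (abs_le.1 h))

variable [IsProbabilityMeasure μ]

theorem mgf_le_exp_mul_variance {Y : Ω → ℝ} {κ b θ : ℝ} (hY : AEMeasurable Y μ)
    (hbdd : ∀ᵐ ω ∂μ, |Y ω| ≤ κ) (hmean : μ[Y] = 0) (hb : 0 < b) (hθ : |θ| * κ ≤ b) :
    mgf Y μ θ ≤ exp (θ ^ 2 * (exp b - 1 - b) / b ^ 2 * variance Y μ) := by
  set c := θ ^ 2 * (exp b - 1 - b) / b ^ 2
  have hY2 : MemLp Y 2 μ := MemLp.of_bound hY.aestronglyMeasurable κ (by simpa using hbdd)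
  have hexp : Integrable (fun ω => exp (θ * Y ω)) μ :=
    integrable_exp_mul_of_mem_Icc hY (hbdd.mono fun ω h => abs_le.1 h)
  have hpt : ∀ᵐ ω ∂μ, exp (θ * Y ω) ≤ 1 + θ * Y ω + c * Y ω ^ 2 := by
    filter_upwards [hbdd] with ω hω
    have h : |θ * Y ω| ≤ b := by
      rw [abs_mul]
      exact (mul_le_mul_of_nonneg_left hω (abs_nonneg θ)).trans hθ
    have hquad : exp (θ * Y ω) - 1 - θ * Y ω ≤ c * Y ω ^ 2 := by
      rw [show c * Y ω ^ 2 = (θ * Y ω) ^ 2 * (exp b - 1 - b) / b ^ 2 by ring,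
        le_div_iff₀ (by positivity)]
      linarith [sq_mul_exp_sub_one_sub_le h]
    linarith
  have hlin : Integrable (fun ω => θ * Y ω) μ := (hY2.integrable one_le_two).const_mul θ
  have hsq : Integrable (fun ω => c * Y ω ^ 2) μ := hY2.integrable_sq.const_mul c
  have haff : Integrable (fun ω => 1 + θ * Y ω) μ := (integrable_const 1).add hlin
  calc mgf Y μ θ ≤ ∫ ω, (1 + θ * Y ω + c * Y ω ^ 2) ∂μ :=
        integral_mono_ae hexp (haff.add hsq) hpt
    _ = 1 + c * variance Y μ := by
        rw [integral_add haff hsq, integral_add (integrable_const 1) hlin, integral_const_mul,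
          integral_const_mul, variance_of_integral_eq_zero hY hmean, hmean]
        simp
    _ ≤ exp (c * variance Y μ) := by linarith [add_one_le_exp (c * variance Y μ)]

theorem iIndepFun.mgf_sum_le_exp_mul_sum_variance {ι : Type*} [Fintype ι] {Y : ι → Ω → ℝ}
    {κ b θ : ℝ} (hindep : iIndepFun Y μ) (hY : ∀ i, AEMeasurable (Y i) μ)
    (hbdd : ∀ i, ∀ᵐ ω ∂μ, |Y i ω| ≤ κ) (hmean : ∀ i, μ[Y i] = 0) (hb : 0 < b)
    (hθ : |θ| * κ ≤ b) :
    mgf (fun ω => ∑ i, Y i ω) μ θ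
      ≤ exp (θ ^ 2 * (exp b - 1 - b) / b ^ 2 * ∑ i, variance (Y i) μ) := by
  have hsum : (fun ω => ∑ i, Y i ω) = ∑ i, Y i := by ext; simp
  rw [hsum, hindep.mgf_sum₀ hY, Finset.mul_sum, exp_sum]
  exact Finset.prod_le_prod (fun i _ => mgf_nonneg)
    (fun i _ => mgf_le_exp_mul_variance (hY i) (hbdd i) (hmean i) hb hθ)

theorem iIndepFun.mgf_sum_apply_le_exp_mul_sum_variance {ι D : Type*} [Fintype ι] [Fintype D]
    {X : ι → Ω → D → ℝ} {κ b θ : ℝ} (hindep : iIndepFun X μ) (hX : ∀ i, AEMeasurable (X i) μ)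
    (hbdd : ∀ i j, ∀ᵐ ω ∂μ, |X i ω j| ≤ κ) (hmean : ∀ i, μ[X i] = 0) (hb : 0 < b)
    (hθ : |θ| * κ ≤ b) (j : D) :
    mgf (fun ω => ∑ i, X i ω j) μ θ
      ≤ exp (θ ^ 2 * (exp b - 1 - b) / b ^ 2 * ∑ i, variance (fun ω => X i ω j) μ) := by
  have hXk (i : ι) (k : D) : Integrable (fun ω => X i ω k) μ :=
    .of_bound ((measurable_pi_apply k).comp_aemeasurable (hX i)).aestronglyMeasurable κ (hbdd i k)
  have hmean_j (i : ι) : ∫ ω, X i ω j ∂μ = 0 := by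
    rw [← eval_integral (hXk i), hmean i, Pi.zero_apply]
  have hindep_j : iIndepFun (fun i ω => X i ω j) μ :=
    hindep.comp (fun _ v => v j) fun _ => measurable_pi_apply j
  exact hindep_j.mgf_sum_le_exp_mul_sum_variance (fun i => (hXk i j).aemeasurable)
    (fun i => hbdd i j) hmean_j hb hθ

theorem exp_sqrt_integral_sq_le_two_mul_integral_cosh {Z : Ω → ℝ}
    (hZ : Integrable (fun ω => Z ω ^ 2) μ) (hcosh : Integrable (fun ω => cosh (Z ω)) μ) :
    exp √(∫ ω, Z ω ^ 2 ∂μ) ≤ 2 * ∫ ω, cosh (Z ω) ∂μ := by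
  have hcosh_sqrt_sq : ∀ x, cosh (√(x ^ 2)) = cosh x := fun x => by
    rw [sqrt_sq_eq_abs, cosh_abs]
  have jensen : cosh (√(∫ ω, Z ω ^ 2 ∂μ)) ≤ ∫ ω, cosh (Z ω) ∂μ := by
    simpa only [Function.comp_def, hcosh_sqrt_sq] using convexOn_cosh_sqrt_s18.map_integral_le
      (continuous_cosh.comp continuous_sqrt).continuousOn isClosed_Ici
      (.of_forall fun ω => sq_nonneg (Z ω)) hZ (by simpa only [Function.comp_def, hcosh_sqrt_sq])
  rw [cosh_eq] at jensen
  linarith [exp_pos (-√(∫ ω, Z ω ^ 2 ∂μ))]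

theorem mul_sqrt_integral_sq_iSup_abs_le_log {ι : Type*} [Fintype ι] [Nonempty ι]
    {S : ι → Ω → ℝ} {C θ B : ℝ} (hS : ∀ j, AEMeasurable (S j) μ)
    (hbdd : ∀ j, ∀ᵐ ω ∂μ, |S j ω| ≤ C) (hθ : 0 ≤ θ)
    (hmgf_pos : ∀ j, mgf (S j) μ θ ≤ B) (hmgf_neg : ∀ j, mgf (S j) μ (-θ) ≤ B) :
    θ * √(∫ ω, (⨆ j, |S j ω|) ^ 2 ∂μ) ≤ log (2 * Fintype.card ι * B) := by
  set Z := fun ω => ⨆ j, |S j ω|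
  have hZ : AEMeasurable Z μ := AEMeasurable.iSup fun j => (hS j).abs
  have hZbdd : ∀ᵐ ω ∂μ, |Z ω| ≤ C := by
    filter_upwards [ae_all_iff.2 hbdd] with ω hω
    rw [abs_of_nonneg (Real.iSup_nonneg fun j => abs_nonneg (S j ω))]
    exact ciSup_le hω
  have hexp (j : ι) (s : ℝ) : Integrable (fun ω => exp (s * S j ω)) μ :=
    integrable_exp_mul_of_mem_Icc (hS j) ((hbdd j).mono fun ω h => abs_le.1 h)
  have hcosh (j : ι) : Integrable (fun ω => cosh (θ * S j ω)) μ :=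
    integrable_comp_of_abs_le (hS j) (hbdd j) (continuous_cosh.comp (continuous_const_mul θ))
  have hcoshZ : Integrable (fun ω => cosh (θ * Z ω)) μ :=
    integrable_comp_of_abs_le hZ hZbdd (continuous_cosh.comp (continuous_const_mul θ))
  have hcosh_sum : ∫ ω, cosh (θ * Z ω) ∂μ ≤ Fintype.card ι * B :=
    calc ∫ ω, cosh (θ * Z ω) ∂μ ≤ ∫ ω, ∑ j, cosh (θ * S j ω) ∂μ :=
          integral_mono hcoshZ (integrable_finsetSum _ fun j _ => hcosh j)
            fun ω => cosh_mul_iSup_abs_le_sum_s18 θ _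
      _ = ∑ j, (mgf (S j) μ θ + mgf (S j) μ (-θ)) / 2 := by
          rw [integral_finsetSum _ fun j _ => hcosh j]
          exact Finset.sum_congr rfl fun j _ => integral_cosh_mul_eq (hexp j θ) (hexp j (-θ))
      _ ≤ ∑ _j : ι, B := Finset.sum_le_sum fun j _ => by linarith [hmgf_pos j, hmgf_neg j]
      _ = Fintype.card ι * B := by simp
  have hjensen := exp_sqrt_integral_sq_le_two_mul_integral_cosh (Z := fun ω => θ * Z ω)
    (integrable_comp_of_abs_le hZ hZbdd ((continuous_const_mul θ).pow 2)) hcoshZ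
  have hscale : √(∫ ω, (θ * Z ω) ^ 2 ∂μ) = θ * √(∫ ω, Z ω ^ 2 ∂μ) := by
    simp_rw [mul_pow]
    rw [integral_const_mul, sqrt_mul (sq_nonneg θ), sqrt_sq hθ]
  rw [hscale] at hjensen
  have hexp_le : exp (θ * √(∫ ω, Z ω ^ 2 ∂μ)) ≤ 2 * Fintype.card ι * B := by linarith
  exact (le_log_iff_exp_le ((exp_pos _).trans_le hexp_le)).2 hexp_le

end ProbabilityTheory

/-- Bernstein-type bound for the sup-norm of a sum of independent mean-zero bounded
random vectors: if ‖X_i‖_∞ ≤ κ a.s. and Γ ≥ max_j Σ_i Var(X_{i,j}), then for all L > 0,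
√(E ‖S_n‖_∞²) ≤ κ L log(2d) + Γ L e(L)/κ with e(L) = exp(1/L) − 1 − 1/L. -/
theorem stmt18 {Ω : Type*} [MeasurableSpace Ω] (μ : Measure Ω) [IsProbabilityMeasure μ]
    (d n : ℕ) (hd : 1 ≤ d) (κ Γ L : ℝ) (hκ : 0 < κ) (hL : 0 < L)
    (X : Fin n → Ω → (Fin d → ℝ))
    (hmeas : ∀ i, Measurable (X i))
    (hindep : iIndepFun X μ)
    (hmean : ∀ i, ∫ ω, X i ω ∂μ = 0)
    (hbdd : ∀ i, ∀ᵐ ω ∂μ, (⨆ j, |X i ω j|) ≤ κ)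
    (hΓ : ∀ j, ∑ i, variance (fun ω => X i ω j) μ ≤ Γ) :
    Real.sqrt (∫ ω, (⨆ j, |∑ i, X i ω j|) ^ 2 ∂μ)
      ≤ κ * L * Real.log (2 * d) + Γ * L * (Real.exp (1 / L) - 1 - 1 / L) / κ := by
  have : Nonempty (Fin d) := ⟨⟨0, hd⟩⟩
  set e := exp (1 / L) - 1 - 1 / L
  have he : 0 ≤ e := by linarith [add_one_le_exp (1 / L)]
  have hcoord_bdd (i : Fin n) (j : Fin d) : ∀ᵐ ω ∂μ, |X i ω j| ≤ κ :=
    (hbdd i).mono fun ω h => (le_ciSup (Finite.bddAbove_range _) j).trans h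
  have hsum_bdd (j : Fin d) : ∀ᵐ ω ∂μ, |∑ i, X i ω j| ≤ n * κ := by
    filter_upwards [ae_all_iff.2 fun i => hcoord_bdd i j] with ω hω
    calc |∑ i, X i ω j| ≤ ∑ i, |X i ω j| := Finset.abs_sum_le_sum_abs _ _
      _ ≤ ∑ _i : Fin n, κ := Finset.sum_le_sum fun i _ => hω i
      _ = n * κ := by simp
  have hmgf (j : Fin d) (s : ℝ) (hs : |s| = (κ * L)⁻¹) :
      mgf (fun ω => ∑ i, X i ω j) μ s ≤ exp (e / κ ^ 2 * Γ) := by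
    have hcoef : s ^ 2 * e / (1 / L) ^ 2 = e / κ ^ 2 := by
      rw [← sq_abs, hs]; field_simp
    refine (hindep.mgf_sum_apply_le_exp_mul_sum_variance (b := 1 / L)
      (fun i => (hmeas i).aemeasurable) hcoord_bdd hmean (by positivity)
      (le_of_eq (by rw [hs]; field_simp)) j).trans (exp_le_exp.2 ?_)
    rw [hcoef]
    exact mul_le_mul_of_nonneg_left (hΓ j) (by positivity)
  have key := mul_sqrt_integral_sq_iSup_abs_le_log (C := n * κ) (fun j => by fun_prop) hsum_bdd
    (by positivity) (fun j => hmgf j _ (abs_of_pos (by positivity)))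
    (fun j => hmgf j _ (by rw [abs_neg, abs_of_pos (by positivity)]))
  rw [Fintype.card_fin, log_mul (by positivity) (exp_pos _).ne', log_exp,
    inv_mul_le_iff₀ (by positivity)] at key
  calc _ ≤ κ * L * (log (2 * d) + e / κ ^ 2 * Γ) := key
    _ = _ := by field_simp
end
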